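/- Let θ, σ, φ, ψ be differentiable real-valued functions satisfying the Einstein–Klein–Gordon evolution system, with potential V ≥ 0, let k ≤ 0 and let b > 0 satisfy the constraint equation at a time t. Then θ'(t) + θ(t)² = 3V(φ(t)) − 2k/b(t)² ≥ 0. -/
import Mathlib

/-- For solutions of the Einstein–Klein–Gordon evolution system
(units `8πG = 1`) with nonnegative potential `V ≥ 0`, curvature index `k ≤ 0`
and scale factor `b > 0` satisfying the constraint equation at time `t`,
one has `θ'(t) + θ(t)² = 3V(φ(t)) − 2k/b(t)² ≥ 0`
(i.e. the comoving volume `𝒱 = ab²` satisfies `𝒱'' ≥ 0`). -/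
theorem expansion_riccati_inequality
    (V : ℝ → ℝ) (hV : Differentiable ℝ V) (hVnn : ∀ x, 0 ≤ V x)
    (θ σ φ ψ b : ℝ → ℝ) (k : ℝ) (hk : k ≤ 0)
    (hθ : Differentiable ℝ θ) (hσ : Differentiable ℝ σ)
    (hφ : Differentiable ℝ φ) (hψ : Differentiable ℝ ψ)
    (eθ : ∀ t, deriv θ t = -(1 / 3) * θ t ^ 2 - 2 * σ t ^ 2 + V (φ t) - ψ t ^ 2)
    (eσ : ∀ t, deriv σ t = -θ t ^ 2 / (3 * Real.sqrt 3) - θ t * σ t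
        + σ t ^ 2 / Real.sqrt 3 + (1 / Real.sqrt 3) * (V (φ t) + ψ t ^ 2 / 2))
    (eφ : ∀ t, deriv φ t = ψ t)
    (eψ : ∀ t, deriv ψ t = -θ t * ψ t - deriv V (φ t))
    (t : ℝ) (hb : 0 < b t)
    (hcon : (1 / 3) * θ t ^ 2 + k / b t ^ 2
        = σ t ^ 2 + V (φ t) + ψ t ^ 2 / 2) :
    deriv θ t + θ t ^ 2 = 3 * V (φ t) - 2 * k / b t ^ 2 ∧
      0 ≤ 3 * V (φ t) - 2 * k / b t ^ 2 := by
  have hb2 : (0:ℝ) < b t ^ 2 := by positivity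
  constructor
  · rw [eθ t]
    have h5 : 2 * k / b t ^ 2 = 2 * (k / b t ^ 2) := by ring
    linarith
  · have h1 : 0 ≤ V (φ t) := hVnn _
    have h2 : 0 ≤ -k / b t ^ 2 := div_nonneg (by linarith) hb2.le
    have h4 : 2 * k / b t ^ 2 ≤ 0 :=
      div_nonpos_of_nonpos_of_nonneg (by linarith) hb2.le
    linarith
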